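/- Let D be a finite DAG with vertices partitioned into sources S, internal vertices I, and sinks T. If the internal vertices are eliminated in forward topological order, the total cost equals the sum over all v ∈ I of |S_v| · outdeg_D(v), where S_v ⊆ S is the set of sources from which v is reachable in D and outdeg_D(v) is the out-degree of v in the original graph D. -/

import Mathlib

variable {V : Type*} [DecidableEq V] [Fintype V]

/-- In-neighborhood of `v` in the edge set `E`. -/
def inN (E : Finset (V × V)) (v : V) : Finset V :=
  (E.filter fun p => p.2 = v).image Prod.fst

/-- Out-neighborhood of `v` in the edge set `E`. -/
def outN (E : Finset (V × V)) (v : V) : Finset V :=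
  (E.filter fun p => p.1 = v).image Prod.snd

/-- Elimination of vertex `v`: delete `v` and add an edge from every in-neighbor
to every out-neighbor of `v` (if not already present). -/
def elimv (E : Finset (V × V)) (v : V) : Finset (V × V) :=
  (E ∪ (inN E v) ×ˢ (outN E v)).filter fun p => p.1 ≠ v ∧ p.2 ≠ v

/-- Eliminate a sequence of vertices, in order. -/
def elimSeq (E : Finset (V × V)) (σ : List V) : Finset (V × V) :=
  σ.foldl elimv E

/-- Markowitz degree of `v`: in-degree times out-degree. -/
def mark (E : Finset (V × V)) (v : V) : ℕ :=
  (inN E v).card * (outN E v).card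

/-- Cost of an elimination sequence: sum of the Markowitz degrees at the
time of each elimination. -/
def cost (E : Finset (V × V)) : List V → ℕ
  | [] => 0
  | v :: σ => mark E v + cost (elimv E v) σ

/-- The directed graph with edge set `E` is acyclic. -/
def Acyclic (E : Finset (V × V)) : Prop :=
  ∀ v : V, ¬ Relation.TransGen (fun a b => (a, b) ∈ E) v v

/-- `E` is an acyclic digraph whose vertices are partitioned into sources `S`
(no in-edges), internal vertices `I`, and sinks `T` (no out-edges). -/
def IsDAGPartition (E : Finset (V × V)) (S I T : Finset V) : Prop :=
  Acyclic E ∧ Disjoint S I ∧ Disjoint S T ∧ Disjoint I T ∧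
    S ∪ I ∪ T = Finset.univ ∧ (∀ s ∈ S, inN E s = ∅) ∧ (∀ t ∈ T, outN E t = ∅)

/-- There is a directed path from `i` to `j` all of whose internal vertices
lie in `X` (the single-edge path has no internal vertices). -/
def PathThrough (E : Finset (V × V)) (X : Finset V) (i j : V) : Prop :=
  ∃ l : List V, (∀ v ∈ l, v ∈ X) ∧ List.Chain' (fun a b => (a, b) ∈ E) (i :: (l ++ [j]))

/-!
Eliminating the vertices of `σ₁` leaves an edge `a → b` exactly when `E` has a walk from `a` to
`b` whose interior lies in `σ₁`. In forward order, when `u` is eliminated the eliminated prefix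
`σ₁` contains every internal vertex that reaches `u`, so the walks into `u` through `σ₁` start
precisely at the sources reaching `u`; and no edge leaves `u` back into `σ₁`, so `u` keeps its
original out-neighbours. Hence the Markowitz degree of `u` at that moment is `|S_u| · outdeg(u)`.
-/

section PathThrough

variable {α : Type*} {E : Finset (α × α)} {X : Finset α} {a b : α}

theorem pathThrough_iff :
    PathThrough E X a b ↔ (a, b) ∈ E ∨ ∃ x ∈ X, (a, x) ∈ E ∧ PathThrough E X x b := by
  constructor
  · rintro ⟨_ | ⟨x, l⟩, hl, hc⟩
    · exact Or.inl (List.isChain_pair.1 hc)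
    · rw [List.cons_append, List.Chain', List.isChain_cons_cons] at hc
      exact Or.inr ⟨x, hl x List.mem_cons_self, hc.1, l,
        fun v hv => hl v (List.mem_cons_of_mem x hv), hc.2⟩
  · rintro (h | ⟨x, hx, hax, l, hl, hc⟩)
    · exact ⟨[], by simp, List.isChain_pair.2 h⟩
    · exact ⟨x :: l, by simpa [hx] using hl, List.IsChain.cons_cons hax hc⟩

theorem PathThrough.single (h : (a, b) ∈ E) : PathThrough E X a b :=
  pathThrough_iff.2 (Or.inl h)

theorem PathThrough.cons {x : α} (hax : (a, x) ∈ E) (hx : x ∈ X) (h : PathThrough E X x b) :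
    PathThrough E X a b :=
  pathThrough_iff.2 (Or.inr ⟨x, hx, hax, h⟩)

@[elab_as_elim]
theorem PathThrough.head_induction_on {motive : α → Prop} (h : PathThrough E X a b)
    (single : ∀ a, (a, b) ∈ E → motive a)
    (cons : ∀ a x, (a, x) ∈ E → x ∈ X → PathThrough E X x b → motive x → motive a) :
    motive a := by
  obtain ⟨l, hl, hc⟩ := h
  induction l generalizing a with
  | nil => exact single a (List.isChain_pair.1 hc)
  | cons x l ih =>
    rw [List.cons_append, List.Chain', List.isChain_cons_cons] at hc
    have hlX : ∀ v ∈ l, v ∈ X := fun v hv => hl v (List.mem_cons_of_mem x hv)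
    exact cons a x hc.1 (hl x List.mem_cons_self) ⟨l, hlX, hc.2⟩ (ih hlX hc.2)

theorem PathThrough.mono {Y : Finset α} (h : PathThrough E X a b) (hXY : X ⊆ Y) :
    PathThrough E Y a b :=
  h.head_induction_on (fun _ h => .single h) fun _ _ hax hx _ ih => ih.cons hax (hXY hx)

theorem PathThrough.trans {v : α} (hav : PathThrough E X a v) (hv : v ∈ X)
    (hvb : PathThrough E X v b) : PathThrough E X a b :=
  hav.head_induction_on (fun _ h => hvb.cons h hv) fun _ _ hax hx _ ih => ih.cons hax hx

theorem PathThrough.transGen (h : PathThrough E X a b) :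
    Relation.TransGen (fun x y => (x, y) ∈ E) a b :=
  h.head_induction_on (fun _ h => .single h) fun _ _ hax _ _ ih => .head hax ih

theorem pathThrough_empty : PathThrough E ∅ a b ↔ (a, b) ∈ E := by
  simp [pathThrough_iff (a := a)]

theorem pathThrough_insert_iff [DecidableEq α] {v : α} :
    PathThrough E (insert v X) a b ↔
      PathThrough E X a b ∨ (PathThrough E X a v ∧ PathThrough E X v b) := by
  constructor
  · intro h
    refine h.head_induction_on (fun _ h => Or.inl (.single h)) ?_
    rintro a x hax hx - ih
    rcases Finset.mem_insert.1 hx with rfl | hx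
    · exact Or.inr ⟨.single hax, ih.elim id And.right⟩
    · exact ih.imp (·.cons hax hx) fun ⟨hxv, hvb⟩ => ⟨hxv.cons hax hx, hvb⟩
  · rintro (h | ⟨hav, hvb⟩)
    · exact h.mono (Finset.subset_insert v X)
    · exact (hav.mono (Finset.subset_insert v X)).trans (Finset.mem_insert_self v X)
        (hvb.mono (Finset.subset_insert v X))

end PathThrough

section Elimination

variable {α : Type*} [DecidableEq α] {E : Finset (α × α)} {a b v : α}

theorem mem_inN : a ∈ inN E v ↔ (a, v) ∈ E := by
  simp [inN]

theorem mem_outN : b ∈ outN E v ↔ (v, b) ∈ E := by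
  simp [outN]

theorem mem_elimv :
    (a, b) ∈ elimv E v ↔ a ≠ v ∧ b ≠ v ∧ ((a, b) ∈ E ∨ ((a, v) ∈ E ∧ (v, b) ∈ E)) := by
  simp only [elimv, Finset.mem_filter, Finset.mem_union, Finset.mem_product, mem_inN, mem_outN]
  tauto

theorem elimSeq_cons (σ : List α) : elimSeq E (v :: σ) = elimSeq (elimv E v) σ := rfl

theorem elimSeq_append_singleton (σ : List α) :
    elimSeq E (σ ++ [v]) = elimv (elimSeq E σ) v := by
  simp [elimSeq]

theorem mem_elimSeq {σ : List α} :
    (a, b) ∈ elimSeq E σ ↔ a ∉ σ ∧ b ∉ σ ∧ PathThrough E σ.toFinset a b := by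
  induction σ using List.reverseRecOn generalizing a b with
  | nil => simp [elimSeq, pathThrough_empty]
  | append_singleton σ v ih =>
    -- needed when `v` already occurs in `σ`
    have hshortcut : v ∈ σ → PathThrough E σ.toFinset a v → PathThrough E σ.toFinset v b →
        PathThrough E σ.toFinset a b := fun hv hav hvb =>
      hav.trans (List.mem_toFinset.2 hv) hvb
    rw [elimSeq_append_singleton, mem_elimv, ih, ih, ih, List.toFinset_append,
      List.toFinset_cons, List.toFinset_nil, insert_empty_eq, Finset.union_comm, ← Finset.insert_eq,
      pathThrough_insert_iff]
    simp only [List.mem_append, List.mem_singleton]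
    tauto

theorem cost_append_singleton (σ : List α) :
    cost E (σ ++ [v]) = cost E σ + mark (elimSeq E σ) v := by
  induction σ generalizing E with
  | nil => simp [cost, elimSeq]
  | cons w σ ih => simp only [List.cons_append, cost, ih, elimSeq_cons, Nat.add_assoc]

end Elimination

section ForwardOrder

variable {α : Type*} [DecidableEq α] {E : Finset (α × α)} {I : Finset α} {σ : List α}

theorem mem_of_edge_of_isPrefix {P : List α} (hσI : σ.toFinset = I)
    (hfwd : ∀ a b : α, (a, b) ∈ E → a ∈ I → b ∈ I → σ.idxOf a < σ.idxOf b)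
    (hP : P <+: σ) {a b : α} (hab : (a, b) ∈ E) (ha : a ∈ I) (hb : b ∈ P) : a ∈ P := by
  obtain ⟨Q, rfl⟩ := hP
  have hlt := hfwd a b hab ha (hσI ▸ List.mem_toFinset.2 (List.mem_append_left Q hb))
  by_contra haP
  rw [List.idxOf_append_of_notMem haP, List.idxOf_append_of_mem hb] at hlt
  have := List.idxOf_lt_length_iff.2 hb
  omega

theorem outN_elimSeq_of_isPrefix {σ₁ : List α} {u : α} (hσ : σ.Nodup) (hσI : σ.toFinset = I)
    (hfwd : ∀ a b : α, (a, b) ∈ E → a ∈ I → b ∈ I → σ.idxOf a < σ.idxOf b)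
    (hpre : σ₁ ++ [u] <+: σ) : outN (elimSeq E σ₁) u = outN E u := by
  have hu : u ∉ σ₁ := (List.nodup_cons.1 (List.nodup_append_comm.1 (hpre.nodup hσ))).1
  have huI : u ∈ I := hσI ▸ List.mem_toFinset.2 (hpre.subset (by simp))
  have hback : ∀ x, (u, x) ∈ E → x ∉ σ₁ := fun x hux hx =>
    hu (mem_of_edge_of_isPrefix hσI hfwd ((List.prefix_append σ₁ [u]).trans hpre) hux huI hx)
  ext b
  rw [mem_outN, mem_outN, mem_elimSeq]
  refine ⟨fun ⟨_, _, h⟩ => ?_, fun h => ⟨hu, hback b h, .single h⟩⟩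
  rcases pathThrough_iff.1 h with h | ⟨x, hx, hux, -⟩
  · exact h
  · exact absurd (List.mem_toFinset.1 hx) (hback x hux)

end ForwardOrder

section DAG

variable {E : Finset (V × V)} {S I T : Finset V} {a b : V}

theorem IsDAGPartition.snd_notMem (hD : IsDAGPartition E S I T) (h : (a, b) ∈ E) : b ∉ S :=
  fun hb => by simpa [hD.2.2.2.2.2.1 b hb] using mem_inN.2 h

theorem IsDAGPartition.fst_mem (hD : IsDAGPartition E S I T) (h : (a, b) ∈ E) (ha : a ∉ S) :
    a ∈ I := by
  have haT : a ∉ T := fun haT => by simpa [hD.2.2.2.2.2.2 a haT] using mem_outN.2 h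
  have := hD.2.2.2.2.1 ▸ Finset.mem_univ a
  simp_all

theorem IsDAGPartition.ne_of_transGen (hD : IsDAGPartition E S I T)
    (h : Relation.TransGen (fun x y => (x, y) ∈ E) a b) : a ≠ b :=
  fun hab => hD.1 b (hab ▸ h)

theorem mem_of_transGen_of_isPrefix (hD : IsDAGPartition E S I T) {σ P : List V}
    (hσI : σ.toFinset = I)
    (hfwd : ∀ a b : V, (a, b) ∈ E → a ∈ I → b ∈ I → σ.idxOf a < σ.idxOf b)
    (hP : P <+: σ) (h : Relation.TransGen (fun x y => (x, y) ∈ E) a b) (ha : a ∉ S)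
    (hb : b ∈ P) : a ∈ P := by
  induction h using Relation.TransGen.head_induction_on with
  | single hab => exact mem_of_edge_of_isPrefix hσI hfwd hP hab (hD.fst_mem hab ha) hb
  | head hac _ ih =>
    exact mem_of_edge_of_isPrefix hσI hfwd hP hac (hD.fst_mem hac ha) (ih (hD.snd_notMem hac))

theorem pathThrough_of_transGen (hD : IsDAGPartition E S I T) {σ σ₁ : List V} {u : V}
    (hσI : σ.toFinset = I)
    (hfwd : ∀ a b : V, (a, b) ∈ E → a ∈ I → b ∈ I → σ.idxOf a < σ.idxOf b)
    (hpre : σ₁ ++ [u] <+: σ) (h : Relation.TransGen (fun x y => (x, y) ∈ E) a u) :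
    PathThrough E σ₁.toFinset a u := by
  induction h using Relation.TransGen.head_induction_on with
  | single hau => exact .single hau
  | @head x y hxy hyu ih =>
    have hy : y ∈ σ₁ ++ [u] :=
      mem_of_transGen_of_isPrefix hD hσI hfwd hpre hyu (hD.snd_notMem hxy) (by simp)
    have hy' : y ∈ σ₁ := by simpa [hD.ne_of_transGen hyu] using hy
    exact ih.cons hxy (List.mem_toFinset.2 hy')

theorem mem_inN_elimSeq_of_isPrefix (hD : IsDAGPartition E S I T) {σ σ₁ : List V} {u : V}
    (hσ : σ.Nodup) (hσI : σ.toFinset = I)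
    (hfwd : ∀ a b : V, (a, b) ∈ E → a ∈ I → b ∈ I → σ.idxOf a < σ.idxOf b)
    (hpre : σ₁ ++ [u] <+: σ) :
    a ∈ inN (elimSeq E σ₁) u ↔ a ∈ S ∧ Relation.ReflTransGen (fun x y => (x, y) ∈ E) a u := by
  have hu : u ∉ σ₁ := (List.nodup_cons.1 (List.nodup_append_comm.1 (hpre.nodup hσ))).1
  have huI : u ∈ I := hσI ▸ List.mem_toFinset.2 (hpre.subset (by simp))
  rw [mem_inN, mem_elimSeq]
  constructor
  · rintro ⟨ha, -, h⟩
    refine ⟨by_contra fun haS => ?_, h.transGen.to_reflTransGen⟩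
    have : a ∈ σ₁ ++ [u] :=
      mem_of_transGen_of_isPrefix hD hσI hfwd hpre h.transGen haS (by simp)
    exact hD.ne_of_transGen h.transGen (by simpa [ha] using this)
  · rintro ⟨haS, hau⟩
    have haI : a ∉ σ₁ := fun ha =>
      Finset.disjoint_left.1 hD.2.1 haS (hσI ▸ List.mem_toFinset.2 (hpre.subset (by simp [ha])))
    have hua : u ≠ a := fun h => Finset.disjoint_left.1 hD.2.1 haS (h ▸ huI)
    refine ⟨haI, hu, pathThrough_of_transGen hD hσI hfwd hpre ?_⟩
    exact (Relation.reflTransGen_iff_eq_or_transGen.1 hau).resolve_left hua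

theorem mark_elimSeq_of_isPrefix (hD : IsDAGPartition E S I T) {σ σ₁ : List V} {u : V}
    (hσ : σ.Nodup) (hσI : σ.toFinset = I)
    (hfwd : ∀ a b : V, (a, b) ∈ E → a ∈ I → b ∈ I → σ.idxOf a < σ.idxOf b)
    (hpre : σ₁ ++ [u] <+: σ) :
    mark (elimSeq E σ₁) u =
      {s : V | s ∈ S ∧ Relation.ReflTransGen (fun a b => (a, b) ∈ E) s u}.ncard *
        (outN E u).card := by
  have hsources : {s : V | s ∈ S ∧ Relation.ReflTransGen (fun a b => (a, b) ∈ E) s u} =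
      ↑(inN (elimSeq E σ₁) u) :=
    Set.ext fun _ => (mem_inN_elimSeq_of_isPrefix hD hσ hσI hfwd hpre).symm
  rw [mark, outN_elimSeq_of_isPrefix hσ hσI hfwd hpre, hsources, Set.ncard_coe_finset]

theorem cost_eq_sum_of_isPrefix (hD : IsDAGPartition E S I T) {σ σ₁ : List V}
    (hσ : σ.Nodup) (hσI : σ.toFinset = I)
    (hfwd : ∀ a b : V, (a, b) ∈ E → a ∈ I → b ∈ I → σ.idxOf a < σ.idxOf b)
    (hpre : σ₁ <+: σ) :
    cost E σ₁ =
      ∑ v ∈ σ₁.toFinset,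
        {s : V | s ∈ S ∧ Relation.ReflTransGen (fun a b => (a, b) ∈ E) s v}.ncard *
          (outN E v).card := by
  induction σ₁ using List.reverseRecOn with
  | nil => rfl
  | append_singleton σ₁ u ih =>
    have hu : u ∉ σ₁ := (List.nodup_cons.1 (List.nodup_append_comm.1 (hpre.nodup hσ))).1
    rw [cost_append_singleton, ih ((List.prefix_append σ₁ [u]).trans hpre),
      mark_elimSeq_of_isPrefix hD hσ hσI hfwd hpre, List.toFinset_append, Finset.union_comm]
    simp [Finset.sum_insert (List.mem_toFinset.not.2 hu), Nat.add_comm]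

end DAG

/-- the cost of forward topological elimination equals
`∑_{v ∈ I} |S_v| · outdeg_D(v)`, where `S_v` is the set of sources from which
`v` is reachable in `D`. -/
theorem cost_forward_eq_sum (E : Finset (V × V)) (S I T : Finset V)
    (hD : IsDAGPartition E S I T)
    (σ : List V) (hσ : σ.Nodup) (hσI : σ.toFinset = I)
    (hfwd : ∀ a b : V, (a, b) ∈ E → a ∈ I → b ∈ I → σ.idxOf a < σ.idxOf b) :
    cost E σ =
      ∑ v ∈ I,
        {s : V | s ∈ S ∧ Relation.ReflTransGen (fun a b => (a, b) ∈ E) s v}.ncard *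
          (outN E v).card := by
  rw [← hσI]
  exact cost_eq_sum_of_isPrefix hD hσ hσI hfwd (List.prefix_refl σ)
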